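/- One-shot bound relating Rényi divergence from uniformity to the two-parameter Rényi conditional entropy: let β ∈ (0,1) and α ∈ [β,1). Then (α(1−β)/(β(1−α))) · D_β( P_XY ‖ U_𝒳 × P_Y ) ≥ log|𝒳| − H̃_{α,β}(X|Y)_{P_XY}, where U_𝒳 × P_Y is the probability distribution on 𝒳×𝒴 given by (x,y) ↦ P_Y(y)/|𝒳|. -/

import Mathlib

open scoped BigOperators

noncomputable section

variable {𝓧 𝓨 : Type*} [Fintype 𝓧] [Fintype 𝓨]

/-- Marginal distribution of the second component. -/
def pY (P : 𝓧 × 𝓨 → ℝ) (y : 𝓨) : ℝ := ∑ x, P (x, y)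

/-- Conditional distribution `P_{X|Y}(x|y)`. -/
def pCond (P : 𝓧 × 𝓨 → ℝ) (x : 𝓧) (y : 𝓨) : ℝ := P (x, y) / pY P y

/-- Two-parameter Rényi conditional entropy `H̃_{α,β}(X|Y)`. -/
def Htilde (P : 𝓧 × 𝓨 → ℝ) (α β : ℝ) : ℝ :=
  α / (β * (1 - α)) *
    Real.logb 2 (∑ y, if 0 < pY P y then
      pY P y * (∑ x, pCond P x y ^ α) ^ (β / α) else 0)

/-- Order-`β` Rényi divergence between two probability distributions (real-valued
formula, used for `β ∈ (0,1)`). -/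
def renyiDiv {𝓩 : Type*} [Fintype 𝓩] (β : ℝ) (P Q : 𝓩 → ℝ) : ℝ :=
  1 / (β - 1) * Real.logb 2 (∑ z, if 0 < P z then P z ^ β * Q z ^ (1 - β) else 0)

/-!
For each `y` with `P_Y(y) > 0` the `y`-slice of the divergence sum is
`P_Y(y) |𝒳|^(β-1) ∑ₓ P_{X|Y}(x|y)^β`, and the power-mean inequality
`∑ₓ q(x)^β ≤ |𝒳|^(1-β/α) (∑ₓ q(x)^α)^(β/α)` turns this into `|𝒳|^(β-β/α)` times the `y`-term
of `H̃_{α,β}`. Taking `logb 2` and multiplying by `α/(β(1-α)) > 0`, the exponent `β - β/α`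
becomes exactly `-1`, which produces the term `log|𝒳|`.
-/

open Finset Real

theorem sum_rpow_le_card_rpow_mul_sum_rpow_rpow {ι : Type*} (s : Finset ι) {q : ι → ℝ}
    (hq : ∀ i ∈ s, 0 ≤ q i) {α β : ℝ} (hβ : 0 < β) (hβα : β ≤ α) :
    ∑ i ∈ s, q i ^ β ≤ (#s : ℝ) ^ (1 - β / α) * (∑ i ∈ s, q i ^ α) ^ (β / α) := by
  have hα : 0 < α := hβ.trans_le hβα
  have hpow : ∀ i ∈ s, (q i ^ β) ^ (α / β) = q i ^ α := fun i hi => by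
    rw [← rpow_mul (hq i hi), mul_div_cancel₀ _ hβ.ne']
  have hmean := rpow_sum_le_const_mul_sum_rpow_of_nonneg s ((one_le_div hβ).2 hβα)
    (fun i hi => rpow_nonneg (hq i hi) β)
  rw [sum_congr rfl hpow] at hmean
  have hsum : 0 ≤ ∑ i ∈ s, q i ^ β := sum_nonneg fun i hi => rpow_nonneg (hq i hi) β
  calc ∑ i ∈ s, q i ^ β = ((∑ i ∈ s, q i ^ β) ^ (α / β)) ^ (β / α) := by
        rw [← rpow_mul hsum, show α / β * (β / α) = 1 by field_simp, rpow_one]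
    _ ≤ ((#s : ℝ) ^ (α / β - 1) * ∑ i ∈ s, q i ^ α) ^ (β / α) :=
        rpow_le_rpow (by positivity) hmean (by positivity)
    _ = (#s : ℝ) ^ (1 - β / α) * (∑ i ∈ s, q i ^ α) ^ (β / α) := by
        rw [mul_rpow (by positivity) (sum_nonneg fun i hi => rpow_nonneg (hq i hi) α),
          ← rpow_mul (by positivity)]
        congr 2
        field_simp

def renyiDivSum {𝓩 : Type*} [Fintype 𝓩] (β : ℝ) (P Q : 𝓩 → ℝ) : ℝ :=
  ∑ z, if 0 < P z then P z ^ β * Q z ^ (1 - β) else 0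

theorem renyiDiv_eq_logb_renyiDivSum {𝓩 : Type*} [Fintype 𝓩] (β : ℝ) (P Q : 𝓩 → ℝ) :
    renyiDiv β P Q = 1 / (β - 1) * logb 2 (renyiDivSum β P Q) := rfl

theorem renyiDivSum_pos {𝓩 : Type*} [Fintype 𝓩] (β : ℝ) {P Q : 𝓩 → ℝ}
    (hQ : ∀ z, 0 ≤ Q z) {z : 𝓩} (hPz : 0 < P z) (hQz : 0 < Q z) : 0 < renyiDivSum β P Q := by
  refine sum_pos' (fun w _ => ?_) ⟨z, mem_univ z, ?_⟩
  · split_ifs with hPw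
    · exact mul_nonneg (rpow_nonneg hPw.le β) (rpow_nonneg (hQ w) _)
    · exact le_rfl
  · rw [if_pos hPz]
    positivity

section Conditional

-- Shadows the ambient variables, so that `[Fintype 𝓨]` is assumed only where `𝓨` is summed over.
variable {𝓧 𝓨 : Type*} [Fintype 𝓧] {P : 𝓧 × 𝓨 → ℝ}

def htildeSum [Fintype 𝓨] (P : 𝓧 × 𝓨 → ℝ) (α β : ℝ) : ℝ :=
  ∑ y, if 0 < pY P y then pY P y * (∑ x, pCond P x y ^ α) ^ (β / α) else 0

theorem Htilde_eq_logb_htildeSum [Fintype 𝓨] (P : 𝓧 × 𝓨 → ℝ) (α β : ℝ) :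
    Htilde P α β = α / (β * (1 - α)) * logb 2 (htildeSum P α β) := rfl

theorem pY_nonneg (hP : ∀ p, 0 ≤ P p) (y : 𝓨) : 0 ≤ pY P y :=
  sum_nonneg fun x _ => hP (x, y)

theorem le_pY (hP : ∀ p, 0 ≤ P p) (x : 𝓧) (y : 𝓨) : P (x, y) ≤ pY P y :=
  single_le_sum (f := fun x => P (x, y)) (fun x _ => hP (x, y)) (mem_univ x)

theorem pCond_nonneg (hP : ∀ p, 0 ≤ P p) (x : 𝓧) (y : 𝓨) : 0 ≤ pCond P x y :=
  div_nonneg (hP _) (pY_nonneg hP y)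

theorem htildeSum_pos [Fintype 𝓨] (hP : ∀ p, 0 ≤ P p) (α β : ℝ) {p : 𝓧 × 𝓨}
    (hp : 0 < P p) : 0 < htildeSum P α β := by
  have hY : 0 < pY P p.2 := hp.trans_le (le_pY hP p.1 p.2)
  refine sum_pos' (fun y _ => ?_) ⟨p.2, mem_univ _, ?_⟩
  · split_ifs with hy
    · exact mul_nonneg hy.le
        (rpow_nonneg (sum_nonneg fun x _ => rpow_nonneg (pCond_nonneg hP x y) α) _)
    · exact le_rfl
  · have hcond : 0 < ∑ x, pCond P x p.2 ^ α :=
      sum_pos' (fun x _ => rpow_nonneg (pCond_nonneg hP x p.2) α)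
        ⟨p.1, mem_univ _, rpow_pos_of_pos (div_pos hp hY) α⟩
    rw [if_pos hY]
    positivity

theorem ite_rpow_mul_rpow_eq_pCond (hP : ∀ p, 0 ≤ P p) {β : ℝ} (hβ : 0 < β) {y : 𝓨}
    (hy : 0 < pY P y) (c : ℝ) (x : 𝓧) :
    (if 0 < P (x, y) then P (x, y) ^ β * c ^ (1 - β) else 0) =
      pY P y ^ β * c ^ (1 - β) * pCond P x y ^ β := by
  rcases (hP (x, y)).eq_or_lt with hzero | hpos
  · simp [← hzero, pCond, zero_rpow hβ.ne']
  · rw [if_pos hpos, pCond, div_rpow hpos.le hy.le]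
    field_simp [(rpow_pos_of_pos hy β).ne']

theorem sum_slice_le_card_rpow_mul (hP : ∀ p, 0 ≤ P p) {α β : ℝ} (hβ : 0 < β) (hβα : β ≤ α)
    (y : 𝓨) :
    ∑ x, (if 0 < P (x, y) then P (x, y) ^ β * (pY P y / Fintype.card 𝓧) ^ (1 - β) else 0) ≤
      (Fintype.card 𝓧 : ℝ) ^ (β - β / α) *
        (if 0 < pY P y then pY P y * (∑ x, pCond P x y ^ α) ^ (β / α) else 0) := by
  set N : ℝ := (Fintype.card 𝓧 : ℝ)
  by_cases hy : 0 < pY P y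
  · have hN : 0 < N := by
      simpa [N] using card_pos.2 (nonempty_of_sum_ne_zero hy.ne')
    have hNpow : N ^ (1 - β / α) = N ^ (β - β / α) * N ^ (1 - β) := by
      rw [← rpow_add hN]
      ring_nf
    have hYpow : pY P y ^ β * pY P y ^ (1 - β) = pY P y := by
      rw [← rpow_add hy, add_sub_cancel, rpow_one]
    have hmean := sum_rpow_le_card_rpow_mul_sum_rpow_rpow univ
      (fun x _ => pCond_nonneg hP x y) hβ hβα
    rw [card_univ] at hmean
    rw [if_pos hy, sum_congr rfl fun x _ => ite_rpow_mul_rpow_eq_pCond hP hβ hy _ x, ← mul_sum]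
    calc pY P y ^ β * (pY P y / N) ^ (1 - β) * ∑ x, pCond P x y ^ β
        ≤ pY P y ^ β * (pY P y / N) ^ (1 - β) *
            (N ^ (1 - β / α) * (∑ x, pCond P x y ^ α) ^ (β / α)) :=
          mul_le_mul_of_nonneg_left hmean (by positivity)
      _ = N ^ (β - β / α) * (pY P y * (∑ x, pCond P x y ^ α) ^ (β / α)) := by
          rw [div_rpow hy.le hN.le, hNpow]
          field_simp
          rw [hYpow, mul_comm]
  · rw [if_neg hy, mul_zero]
    exact (sum_eq_zero fun x _ => if_neg fun hx => hy (hx.trans_le (le_pY hP x y))).le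

theorem renyiDivSum_le_card_rpow_mul_htildeSum [Fintype 𝓨] (hP : ∀ p, 0 ≤ P p) {α β : ℝ}
    (hβ : 0 < β) (hβα : β ≤ α) :
    renyiDivSum β P (fun p => pY P p.2 / Fintype.card 𝓧) ≤
      (Fintype.card 𝓧 : ℝ) ^ (β - β / α) * htildeSum P α β := by
  rw [renyiDivSum, Fintype.sum_prod_type_right, htildeSum, mul_sum]
  exact sum_le_sum fun y _ => sum_slice_le_card_rpow_mul hP hβ hβα y

end Conditional

theorem renyiDiv_uniform_lower_bound_general
    (P : 𝓧 × 𝓨 → ℝ) (hP : ∀ p, 0 ≤ P p) (hPsum : ∑ p, P p = 1)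
    (α β : ℝ) (hβ0 : 0 < β) (hβα : β ≤ α) (hα1 : α < 1) :
    α * (1 - β) / (β * (1 - α)) *
        renyiDiv β P (fun p : 𝓧 × 𝓨 => pY P p.2 / (Fintype.card 𝓧 : ℝ)) ≥
      Real.logb 2 (Fintype.card 𝓧) - Htilde P α β := by
  obtain ⟨p₀, -, hp₀⟩ := exists_lt_of_sum_lt (s := univ) (f := 0) (g := P) (by simp [hPsum])
  have hN : (0 : ℝ) < Fintype.card 𝓧 := by
    have : Nonempty 𝓧 := ⟨p₀.1⟩
    positivity
  have hα0 : 0 < α := hβ0.trans_le hβα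
  have hβ1 : β < 1 := hβα.trans_lt hα1
  set S := renyiDivSum β P (fun p => pY P p.2 / Fintype.card 𝓧)
  set T := htildeSum P α β
  have hS : 0 < S := renyiDivSum_pos β (fun p => div_nonneg (pY_nonneg hP p.2) hN.le) hp₀
    (div_pos (hp₀.trans_le (le_pY hP p₀.1 p₀.2)) hN)
  have hlog : logb 2 S ≤ (β - β / α) * logb 2 (Fintype.card 𝓧) + logb 2 T := by
    rw [← logb_rpow_eq_mul_logb_of_pos hN,
      ← logb_mul (by positivity) (htildeSum_pos hP α β hp₀).ne']
    exact logb_le_logb_of_le one_lt_two hS (renyiDivSum_le_card_rpow_mul_htildeSum hP hβ0 hβα)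
  have hcoef : α * (1 - β) / (β * (1 - α)) * (1 / (β - 1)) = -(α / (β * (1 - α))) := by
    field_simp [(sub_neg.2 hβ1).ne, (sub_pos.2 hα1).ne']
    ring
  have hexp : α / (β * (1 - α)) * (β - β / α) = -1 := by
    field_simp [(sub_pos.2 hα1).ne']
    ring
  have hc : 0 < α / (β * (1 - α)) := div_pos hα0 (mul_pos hβ0 (sub_pos.2 hα1))
  have key := mul_le_mul_of_nonneg_left hlog hc.le
  rw [mul_add, ← mul_assoc, hexp] at key
  rw [renyiDiv_eq_logb_renyiDivSum, Htilde_eq_logb_htildeSum, ← mul_assoc, hcoef]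
  linarith

/-- one-shot bound relating the Rényi divergence from uniformity to
the two-parameter Rényi conditional entropy: for `β ∈ (0,1)` and `α ∈ [β,1)`,
`(α(1−β)/(β(1−α)))·D_β(P_XY‖U_𝒳×P_Y) ≥ log|𝒳| − H̃_{α,β}(X|Y)`. -/
theorem renyiDiv_uniform_lower_bound
    [Nonempty 𝓧] [Nonempty 𝓨]
    (P : 𝓧 × 𝓨 → ℝ) (hP : ∀ p, 0 ≤ P p) (hPsum : ∑ p, P p = 1)
    (α β : ℝ) (hβ0 : 0 < β) (hβ1 : β < 1) (hβα : β ≤ α) (hα1 : α < 1) :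
    α * (1 - β) / (β * (1 - α)) *
        renyiDiv β P (fun p : 𝓧 × 𝓨 => pY P p.2 / (Fintype.card 𝓧 : ℝ)) ≥
      Real.logb 2 (Fintype.card 𝓧) - Htilde P α β :=
  renyiDiv_uniform_lower_bound_general P hP hPsum α β hβ0 hβα hα1
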